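/- arXiv:1510.08750 — 2 statements merged into one kernel-verified Lean document; each statement's English description precedes it below -/
import Mathlib

section
/- Suppose (ψ, A₁, A₂) is a smooth solution on [0,T] × ℝ² of the Dirac equation i∂_tψ + iαʲ∂_jψ = mβψ − αʲA_jψ together with ∂_tA₁ = −2⟨ψ, α²ψ⟩ and ∂_tA₂ = 2⟨ψ, α¹ψ⟩. If the constraint ∂₁A₂ − ∂₂A₁ = −2⟨ψ,ψ⟩ holds at time t = 0, then it holds for all t ∈ [0,T]. -/
open Matrix

noncomputable section

/-- Time derivative ∂_t of a function of (t, x, y). -/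
def dt {F : Type*} [NormedAddCommGroup F] [NormedSpace ℝ F]
    (f : ℝ → ℝ → ℝ → F) (t x y : ℝ) : F := deriv (fun s => f s x y) t

/-- Spatial derivative ∂₁ of a function of (t, x, y). -/
def dx1 {F : Type*} [NormedAddCommGroup F] [NormedSpace ℝ F]
    (f : ℝ → ℝ → ℝ → F) (t x y : ℝ) : F := deriv (fun s => f t s y) x

/-- Spatial derivative ∂₂ of a function of (t, x, y). -/
def dx2 {F : Type*} [NormedAddCommGroup F] [NormedSpace ℝ F]
    (f : ℝ → ℝ → ℝ → F) (t x y : ℝ) : F := deriv (fun s => f t x s) y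

/-- The ℂ² inner product ⟨u,v⟩ = ū₁v₁ + ū₂v₂ (conjugate-linear in the first slot). -/
def dotc (u v : Fin 2 → ℂ) : ℂ := ∑ i, (starRingEnd ℂ) (u i) * v i


lemma dotc_add_left (u v w : Fin 2 → ℂ) : dotc (u + v) w = dotc u w + dotc v w := by
  simp [dotc, Fin.sum_univ_two, map_add]; ring
lemma dotc_add_right (u v w : Fin 2 → ℂ) : dotc u (v + w) = dotc u v + dotc u w := by
  simp [dotc, Fin.sum_univ_two]; ring
lemma dotc_smul_left (c : ℂ) (u v : Fin 2 → ℂ) :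
    dotc (c • u) v = (starRingEnd ℂ) c * dotc u v := by
  simp [dotc, Fin.sum_univ_two, _root_.map_mul]; ring
lemma dotc_smul_right (c : ℂ) (u v : Fin 2 → ℂ) : dotc u (c • v) = c * dotc u v := by
  simp [dotc, Fin.sum_univ_two]; ring
lemma dotc_neg_left (u v : Fin 2 → ℂ) : dotc (-u) v = -dotc u v := by
  simp [dotc, Fin.sum_univ_two]
lemma dotc_neg_right (u v : Fin 2 → ℂ) : dotc u (-v) = -dotc u v := by
  simp [dotc, Fin.sum_univ_two]
lemma dotc_sub_left (u v w : Fin 2 → ℂ) : dotc (u - v) w = dotc u w - dotc v w := by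
  simp [dotc, Fin.sum_univ_two, map_sub]; ring
lemma dotc_sub_right (u v w : Fin 2 → ℂ) : dotc u (v - w) = dotc u v - dotc u w := by
  simp [dotc, Fin.sum_univ_two]; ring

lemma dotc_mulVec (M : Matrix (Fin 2) (Fin 2) ℂ) (hM : Mᴴ = M) (u v : Fin 2 → ℂ) :
    dotc (M.mulVec u) v = dotc u (M.mulVec v) := by
  have : dotc (M.mulVec u) v = dotc u (Mᴴ.mulVec v) := by
    simp [dotc, Fin.sum_univ_two, Matrix.mulVec, dotProduct, conjTranspose,
      map_add, _root_.map_mul]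
    ring
  rw [this, hM]

-- derivative of dotc
lemma HasDerivAt.dotc' {f g : ℝ → Fin 2 → ℂ} {f' g' : Fin 2 → ℂ} {s : ℝ}
    (hf : HasDerivAt f f' s) (hg : HasDerivAt g g' s) :
    HasDerivAt (fun s => dotc (f s) (g s)) (dotc f' (g s) + dotc (f s) g') s := by
  have hfi : ∀ i, HasDerivAt (fun s => f s i) (f' i) s := fun i => hasDerivAt_pi.1 hf i
  have hgi : ∀ i, HasDerivAt (fun s => g s i) (g' i) s := fun i => hasDerivAt_pi.1 hg i
  have h : ∀ i : Fin 2, HasDerivAt (fun s => (starRingEnd ℂ) (f s i) * g s i)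
      ((starRingEnd ℂ) (f' i) * g s i + (starRingEnd ℂ) (f s i) * g' i) s := by
    intro i
    exact ((hfi i).star).mul (hgi i)
  have := ((h 0).add (h 1))
  have e : (fun s => dotc (f s) (g s)) = ((fun s => (starRingEnd ℂ) (f s 0) * g s 0)
      + fun s => (starRingEnd ℂ) (f s 1) * g s 1) := by
    ext s; simp [dotc, Fin.sum_univ_two]
  rw [e]
  exact this.congr_deriv (by simp [dotc, Fin.sum_univ_two]; ring)

lemma HasDerivAt.mulVec' {f : ℝ → Fin 2 → ℂ} {f' : Fin 2 → ℂ} {s : ℝ}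
    (M : Matrix (Fin 2) (Fin 2) ℂ) (hf : HasDerivAt f f' s) :
    HasDerivAt (fun s => M.mulVec (f s)) (M.mulVec f') s := by
  have hfi : ∀ i, HasDerivAt (fun s => f s i) (f' i) s := fun i => hasDerivAt_pi.1 hf i
  rw [hasDerivAt_pi]
  intro i
  have : ∀ s, M.mulVec (f s) i = M i 0 * f s 0 + M i 1 * f s 1 := by
    intro s; simp [Matrix.mulVec, dotProduct, Fin.sum_univ_two]
  simp only [this]
  have : M.mulVec f' i = M i 0 * f' 0 + M i 1 * f' 1 := by
    simp [Matrix.mulVec, dotProduct, Fin.sum_univ_two]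
  rw [this]
  exact ((hfi 0).const_mul _).add ((hfi 1).const_mul _)


namespace Aux

variable {f : ℝ → ℝ → ℝ → ℝ}

/-- curve derivatives -/
lemma curve_t (x y : ℝ) (t : ℝ) : HasDerivAt (fun s => ((s, x, y) : ℝ × ℝ × ℝ)) (1, 0, 0) t :=
  (hasDerivAt_id t).prodMk (hasDerivAt_const t (x, y))

lemma curve_x (t y : ℝ) (x : ℝ) : HasDerivAt (fun s => ((t, s, y) : ℝ × ℝ × ℝ)) (0, 1, 0) x :=
  (hasDerivAt_const x t).prodMk ((hasDerivAt_id x).prodMk (hasDerivAt_const x y))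

lemma curve_y (t x : ℝ) (y : ℝ) : HasDerivAt (fun s => ((t, x, s) : ℝ × ℝ × ℝ)) (0, 0, 1) y :=
  (hasDerivAt_const y t).prodMk ((hasDerivAt_const y x).prodMk (hasDerivAt_id y))

section
variable (hf : ContDiff ℝ (⊤ : ℕ∞) (fun p : ℝ × ℝ × ℝ => f p.1 p.2.1 p.2.2))

/-- abbreviations -/
private def Fc (f : ℝ → ℝ → ℝ → ℝ) : ℝ × ℝ × ℝ → ℝ := fun p => f p.1 p.2.1 p.2.2
private def D (f : ℝ → ℝ → ℝ → ℝ) : ℝ × ℝ × ℝ → (ℝ × ℝ × ℝ) →L[ℝ] ℝ := fderiv ℝ (Fc f)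
private def D2 (f : ℝ → ℝ → ℝ → ℝ) (p : ℝ × ℝ × ℝ) := fderiv ℝ (D f) p

include hf

lemma hFd : ∀ p, HasFDerivAt (Fc f) (D f p) p :=
  fun p => (hf.differentiable (by simp) p).hasFDerivAt

lemma hDd : ∀ p, HasFDerivAt (D f) (D2 f p) p := by
  intro p
  have : ContDiff ℝ (⊤ : ℕ∞) (D f) := hf.fderiv_right (by simp)
  exact (this.differentiable (by simp) p).hasFDerivAt

/-- evaluation of first derivative: partials as `D` applied to basis vectors -/
lemma dt_eq (t x y : ℝ) : dt f t x y = D f (t, x, y) (1, 0, 0) := by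
  have h := (hFd hf (t, x, y)).comp_hasDerivAt t (curve_t x y t)
  have h2 : HasDerivAt (fun s => f s x y) (D f (t, x, y) (1, 0, 0)) t := h
  unfold dt
  exact h2.deriv

lemma dx1_eq (t x y : ℝ) : dx1 f t x y = D f (t, x, y) (0, 1, 0) := by
  have h := (hFd hf (t, x, y)).comp_hasDerivAt x (curve_x t y x)
  have h2 : HasDerivAt (fun s => f t s y) (D f (t, x, y) (0, 1, 0)) x := h
  unfold dx1
  exact h2.deriv

lemma dx2_eq (t x y : ℝ) : dx2 f t x y = D f (t, x, y) (0, 0, 1) := by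
  have h := (hFd hf (t, x, y)).comp_hasDerivAt y (curve_y t x y)
  have h2 : HasDerivAt (fun s => f t x s) (D f (t, x, y) (0, 0, 1)) y := h
  unfold dx2
  exact h2.deriv

/-- derivative of `fun s => D f (c s) w` along a curve -/
lemma D_along_t (w : ℝ × ℝ × ℝ) (t x y : ℝ) :
    HasDerivAt (fun s => D f (s, x, y) w) (D2 f (t, x, y) (1, 0, 0) w) t := by
  have h1 : HasFDerivAt (fun p => D f p w)
      ((ContinuousLinearMap.apply ℝ ℝ w).comp (D2 f (t, x, y))) (t, x, y) :=
    (ContinuousLinearMap.apply ℝ ℝ w).hasFDerivAt.comp _ (hDd hf (t, x, y))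
  exact h1.comp_hasDerivAt t (curve_t x y t)

lemma D_along_x (w : ℝ × ℝ × ℝ) (t x y : ℝ) :
    HasDerivAt (fun s => D f (t, s, y) w) (D2 f (t, x, y) (0, 1, 0) w) x := by
  have h1 : HasFDerivAt (fun p => D f p w)
      ((ContinuousLinearMap.apply ℝ ℝ w).comp (D2 f (t, x, y))) (t, x, y) :=
    (ContinuousLinearMap.apply ℝ ℝ w).hasFDerivAt.comp _ (hDd hf (t, x, y))
  exact h1.comp_hasDerivAt x (curve_x t y x)

lemma D_along_y (w : ℝ × ℝ × ℝ) (t x y : ℝ) :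
    HasDerivAt (fun s => D f (t, x, s) w) (D2 f (t, x, y) (0, 0, 1) w) y := by
  have h1 : HasFDerivAt (fun p => D f p w)
      ((ContinuousLinearMap.apply ℝ ℝ w).comp (D2 f (t, x, y))) (t, x, y) :=
    (ContinuousLinearMap.apply ℝ ℝ w).hasFDerivAt.comp _ (hDd hf (t, x, y))
  exact h1.comp_hasDerivAt y (curve_y t x y)

/-- ∂₁(∂ₜ f) as slice derivative -/
lemma dt_slice_x (t x y : ℝ) :
    HasDerivAt (fun s => dt f t s y) (dx1 (dt f) t x y) x := by
  have hfun : (fun s => dt f t s y) = fun s => D f (t, s, y) (1, 0, 0) := by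
    funext s; exact dt_eq hf t s y
  have h := D_along_x hf (1, 0, 0) t x y
  rw [hfun]
  have : dx1 (dt f) t x y = D2 f (t, x, y) (0, 1, 0) (1, 0, 0) := by
    unfold dx1
    rw [hfun]
    exact h.deriv
  rw [this]
  exact h

lemma dt_slice_y (t x y : ℝ) :
    HasDerivAt (fun s => dt f t x s) (dx2 (dt f) t x y) y := by
  have hfun : (fun s => dt f t x s) = fun s => D f (t, x, s) (1, 0, 0) := by
    funext s; exact dt_eq hf t x s
  have h := D_along_y hf (1, 0, 0) t x y
  rw [hfun]
  have : dx2 (dt f) t x y = D2 f (t, x, y) (0, 0, 1) (1, 0, 0) := by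
    unfold dx2
    rw [hfun]
    exact h.deriv
  rw [this]
  exact h

/-- mixed partial symmetry: ∂ₜ(∂₁ f) = ∂₁(∂ₜ f), as a HasDerivAt statement -/
lemma mixed_dx1 (t x y : ℝ) :
    HasDerivAt (fun s => dx1 f s x y) (dx1 (dt f) t x y) t := by
  have hfun : (fun s => dx1 f s x y) = fun s => D f (s, x, y) (0, 1, 0) := by
    funext s; exact dx1_eq hf s x y
  have h := D_along_t hf (0, 1, 0) t x y
  rw [hfun]
  have hsym : D2 f (t, x, y) (1, 0, 0) (0, 1, 0) = D2 f (t, x, y) (0, 1, 0) (1, 0, 0) :=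
    second_derivative_symmetric (hFd hf) (hDd hf (t, x, y)) _ _
  have hval : dx1 (dt f) t x y = D2 f (t, x, y) (0, 1, 0) (1, 0, 0) := by
    have hfun2 : (fun s => dt f t s y) = fun s => D f (t, s, y) (1, 0, 0) := by
      funext s; exact dt_eq hf t s y
    unfold dx1
    rw [hfun2]
    exact (D_along_x hf (1, 0, 0) t x y).deriv
  rw [hval, ← hsym]
  exact h

lemma mixed_dx2 (t x y : ℝ) :
    HasDerivAt (fun s => dx2 f s x y) (dx2 (dt f) t x y) t := by
  have hfun : (fun s => dx2 f s x y) = fun s => D f (s, x, y) (0, 0, 1) := by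
    funext s; exact dx2_eq hf s x y
  have h := D_along_t hf (0, 0, 1) t x y
  rw [hfun]
  have hsym : D2 f (t, x, y) (1, 0, 0) (0, 0, 1) = D2 f (t, x, y) (0, 0, 1) (1, 0, 0) :=
    second_derivative_symmetric (hFd hf) (hDd hf (t, x, y)) _ _
  have hval : dx2 (dt f) t x y = D2 f (t, x, y) (0, 0, 1) (1, 0, 0) := by
    have hfun2 : (fun s => dt f t x s) = fun s => D f (t, x, s) (1, 0, 0) := by
      funext s; exact dt_eq hf t x s
    unfold dx2
    rw [hfun2]
    exact (D_along_y hf (1, 0, 0) t x y).deriv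
  rw [hval, ← hsym]
  exact h

end
end Aux

theorem stmt_6
    (α : Fin 2 → Matrix (Fin 2) (Fin 2) ℂ) (β : Matrix (Fin 2) (Fin 2) ℂ)
    (hαherm : ∀ j, (α j)ᴴ = α j) (hβherm : βᴴ = β)
    (hβ2 : β * β = 1) (hα2 : ∀ j, α j * α j = 1)
    (hαβ : ∀ j, α j * β + β * α j = 0)
    (hαα : ∀ j k, α j * α k + α k * α j = if j = k then (2 : ℂ) • 1 else 0)
    (m T : ℝ) (hT : 0 ≤ T)
    (ψ : ℝ → ℝ → ℝ → (Fin 2 → ℂ)) (A : Fin 2 → ℝ → ℝ → ℝ → ℝ)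
    (hψ : ContDiff ℝ (⊤ : ℕ∞) (fun p : ℝ × ℝ × ℝ => ψ p.1 p.2.1 p.2.2))
    (hA : ∀ j, ContDiff ℝ (⊤ : ℕ∞) (fun p : ℝ × ℝ × ℝ => A j p.1 p.2.1 p.2.2))
    (hDirac : ∀ t ∈ Set.Icc 0 T, ∀ x y,
      Complex.I • dt ψ t x y + Complex.I • (α 0).mulVec (dx1 ψ t x y)
        + Complex.I • (α 1).mulVec (dx2 ψ t x y)
      = (m : ℂ) • β.mulVec (ψ t x y)
        - ((A 0 t x y : ℂ) • (α 0).mulVec (ψ t x y)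
            + (A 1 t x y : ℂ) • (α 1).mulVec (ψ t x y)))
    (hA1 : ∀ t ∈ Set.Icc 0 T, ∀ x y,
      ((dt (A 0) t x y : ℝ) : ℂ) = -2 * dotc (ψ t x y) ((α 1).mulVec (ψ t x y)))
    (hA2 : ∀ t ∈ Set.Icc 0 T, ∀ x y,
      ((dt (A 1) t x y : ℝ) : ℂ) = 2 * dotc (ψ t x y) ((α 0).mulVec (ψ t x y)))
    (hinit : ∀ x y,
      (((dx1 (A 1) 0 x y - dx2 (A 0) 0 x y : ℝ)) : ℂ) = -2 * dotc (ψ 0 x y) (ψ 0 x y)) :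
    ∀ t ∈ Set.Icc 0 T, ∀ x y,
      (((dx1 (A 1) t x y - dx2 (A 0) t x y : ℝ)) : ℂ) = -2 * dotc (ψ t x y) (ψ t x y) := by
  intro t ht x y
  -- slice derivatives of ψ
  have hψt : ∀ (s x y : ℝ), HasDerivAt (fun u => ψ u x y) (dt ψ s x y) s := by
    intro s x y
    have h : DifferentiableAt ℝ (fun u => ψ u x y) s :=
      DifferentiableAt.comp (g := fun p : ℝ × ℝ × ℝ => ψ p.1 p.2.1 p.2.2) s
        ((hψ.differentiable (by simp)) (s, x, y)) (Aux.curve_t x y s).differentiableAt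
    exact h.hasDerivAt
  have hψx : ∀ (s x y : ℝ), HasDerivAt (fun u => ψ s u y) (dx1 ψ s x y) x := by
    intro s x y
    have h : DifferentiableAt ℝ (fun u => ψ s u y) x :=
      DifferentiableAt.comp (g := fun p : ℝ × ℝ × ℝ => ψ p.1 p.2.1 p.2.2) x
        ((hψ.differentiable (by simp)) (s, x, y)) (Aux.curve_x s y x).differentiableAt
    exact h.hasDerivAt
  have hψy : ∀ (s x y : ℝ), HasDerivAt (fun u => ψ s x u) (dx2 ψ s x y) y := by
    intro s x y
    have h : DifferentiableAt ℝ (fun u => ψ s x u) y :=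
      DifferentiableAt.comp (g := fun p : ℝ × ℝ × ℝ => ψ p.1 p.2.1 p.2.2) y
        ((hψ.differentiable (by simp)) (s, x, y)) (Aux.curve_y s x y).differentiableAt
    exact h.hasDerivAt
  -- the conserved quantity and its derivative
  have hder : ∀ s : ℝ, HasDerivAt
      (fun s => (((dx1 (A 1) s x y - dx2 (A 0) s x y : ℝ)) : ℂ)
        + 2 * dotc (ψ s x y) (ψ s x y))
      ((((dx1 (dt (A 1)) s x y - dx2 (dt (A 0)) s x y : ℝ)) : ℂ)
        + 2 * (dotc (dt ψ s x y) (ψ s x y) + dotc (ψ s x y) (dt ψ s x y))) s := by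
    intro s
    exact (((Aux.mixed_dx1 (hA 1) s x y).sub (Aux.mixed_dx2 (hA 0) s x y)).ofReal_comp).add
      (((hψt s x y).dotc' (hψt s x y)).const_mul 2)
  -- the derivative vanishes on [0, T]
  have hE0 : ∀ s ∈ Set.Icc (0:ℝ) T,
      (((dx1 (dt (A 1)) s x y - dx2 (dt (A 0)) s x y : ℝ)) : ℂ)
        + 2 * (dotc (dt ψ s x y) (ψ s x y) + dotc (ψ s x y) (dt ψ s x y)) = 0 := by
    intro s hs
    -- key1 : ∂₁ of ∂ₜ A₁
    have key1 : ((dx1 (dt (A 1)) s x y : ℝ) : ℂ)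
        = 2 * (dotc (dx1 ψ s x y) ((α 0).mulVec (ψ s x y))
            + dotc (ψ s x y) ((α 0).mulVec (dx1 ψ s x y))) := by
      have h1 : HasDerivAt (fun u => ((dt (A 1) s u y : ℝ) : ℂ))
          ((dx1 (dt (A 1)) s x y : ℝ) : ℂ) x := (Aux.dt_slice_x (hA 1) s x y).ofReal_comp
      have h2 : HasDerivAt (fun u => 2 * dotc (ψ s u y) ((α 0).mulVec (ψ s u y)))
          (2 * (dotc (dx1 ψ s x y) ((α 0).mulVec (ψ s x y))
            + dotc (ψ s x y) ((α 0).mulVec (dx1 ψ s x y)))) x :=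
        ((hψx s x y).dotc' ((hψx s x y).mulVec' (α 0))).const_mul 2
      have hfe : (fun u => ((dt (A 1) s u y : ℝ) : ℂ))
          = fun u => 2 * dotc (ψ s u y) ((α 0).mulVec (ψ s u y)) := by
        funext u; exact hA2 s hs u y
      rw [hfe] at h1
      exact h1.unique h2
    have key0 : ((dx2 (dt (A 0)) s x y : ℝ) : ℂ)
        = -2 * (dotc (dx2 ψ s x y) ((α 1).mulVec (ψ s x y))
            + dotc (ψ s x y) ((α 1).mulVec (dx2 ψ s x y))) := by
      have h1 : HasDerivAt (fun u => ((dt (A 0) s x u : ℝ) : ℂ))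
          ((dx2 (dt (A 0)) s x y : ℝ) : ℂ) y := (Aux.dt_slice_y (hA 0) s x y).ofReal_comp
      have h2 : HasDerivAt (fun u => -2 * dotc (ψ s x u) ((α 1).mulVec (ψ s x u)))
          (-2 * (dotc (dx2 ψ s x y) ((α 1).mulVec (ψ s x y))
            + dotc (ψ s x y) ((α 1).mulVec (dx2 ψ s x y)))) y :=
        ((hψy s x y).dotc' ((hψy s x y).mulVec' (α 1))).const_mul (-2)
      have hfe : (fun u => ((dt (A 0) s x u : ℝ) : ℂ))
          = fun u => -2 * dotc (ψ s x u) ((α 1).mulVec (ψ s x u)) := by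
        funext u; exact hA1 s hs x u
      rw [hfe] at h1
      exact h1.unique h2
    -- use the Dirac equation
    have hd := hDirac s hs x y
    have hX := congrArg (fun v => dotc (ψ s x y) v) hd
    have hY := congrArg (fun v => dotc v (ψ s x y)) hd
    simp only [dotc_add_right, dotc_sub_right, dotc_smul_right] at hX
    simp only [dotc_add_left, dotc_sub_left, dotc_smul_left, Complex.conj_I,
      Complex.conj_ofReal, dotc_mulVec (α 0) (hαherm 0), dotc_mulVec (α 1) (hαherm 1),
      dotc_mulVec β hβherm] at hY
    have hS : Complex.I * (dotc (dt ψ s x y) (ψ s x y) + dotc (ψ s x y) (dt ψ s x y))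
        = Complex.I * (-(dotc (dx1 ψ s x y) ((α 0).mulVec (ψ s x y))
              + dotc (ψ s x y) ((α 0).mulVec (dx1 ψ s x y)))
            - (dotc (dx2 ψ s x y) ((α 1).mulVec (ψ s x y))
              + dotc (ψ s x y) ((α 1).mulVec (dx2 ψ s x y)))) := by
      linear_combination hX - hY
    have hS2 := mul_left_cancel₀ Complex.I_ne_zero hS
    push_cast
    linear_combination key1 - key0 + 2 * hS2
  -- constancy
  have hcont : ContinuousOn
      (fun s => (((dx1 (A 1) s x y - dx2 (A 0) s x y : ℝ)) : ℂ)
        + 2 * dotc (ψ s x y) (ψ s x y)) (Set.Icc 0 T) :=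
    fun s _ => ((hder s).continuousAt).continuousWithinAt
  have hconst := constant_of_has_deriv_right_zero hcont (fun s hs => by
    have h := (hder s).hasDerivWithinAt (s := Set.Ici s)
    rw [hE0 s (Set.Ico_subset_Icc_self hs)] at h
    exact h)
  have hgt := hconst t ht
  linear_combination hgt + hinit x y

end
end

section
/- For every ε > 0 there exists C such that for all f₁, f₂, f₃ ∈ L²(ℝ²) with nonnegative Fourier transforms and all T ∈ ℕ: ∫_{ξ₁+ξ₂+ξ₃=0} χ_{{|ξ₂| = T + O(1)}} ⟨ξ₁⟩^{−1/2−ε} f̂₁(ξ₁) f̂₂(ξ₂) f̂₃(ξ₃) dξ ≤ C ‖f₁‖_{L²} ‖f₂‖_{L²} ‖f₃‖_{L²}. -/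
open MeasureTheory
open scoped ENNReal NNReal

lemma J_lt_top (ε : ℝ) (hε : 0 < ε) :
    (∫⁻ y : ℝ, ENNReal.ofReal ((1 + y ^ 2) ^ (-(1 / 2 : ℝ) - ε))) < ⊤ := by
  have hint : Integrable (fun y : ℝ => (4 : ℝ) ^ ((1 / 2 : ℝ) + ε) * (1 + ‖y‖) ^ (-(1 + 2 * ε))) := by
    refine Integrable.const_mul ?_ _
    refine integrable_one_add_norm (μ := volume) ?_
    simp only [Module.finrank_self]
    push_cast; linarith
  refine lt_of_le_of_lt (lintegral_mono fun y => ENNReal.ofReal_le_ofReal ?_) hint.lintegral_lt_top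
  have h1 : (0:ℝ) < ((1 + |y|) / 2) ^ 2 := by positivity
  have h2 : ((1 + |y|) / 2) ^ 2 ≤ 1 + y ^ 2 := by nlinarith [sq_abs y, abs_nonneg y]
  have h3 : (1 + y ^ 2) ^ (-(1 / 2 : ℝ) - ε) ≤ (((1 + |y|) / 2) ^ 2) ^ (-(1 / 2 : ℝ) - ε) :=
    Real.rpow_le_rpow_of_nonpos h1 h2 (by linarith)
  refine h3.trans (le_of_eq ?_)
  have habs : (0:ℝ) ≤ 1 + |y| := by positivity
  rw [div_pow, Real.div_rpow (by positivity) (by norm_num), ← Real.rpow_natCast (1 + |y|) 2,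
    ← Real.rpow_mul habs, ← Real.rpow_natCast (2:ℝ) 2, ← Real.rpow_mul (by norm_num : (0:ℝ) ≤ 2)]
  rw [div_eq_mul_inv, ← Real.rpow_neg (by norm_num : (0:ℝ) ≤ 2), mul_comm]
  rw [Real.norm_eq_abs]
  have e1 : (2:ℝ) ^ (-((2:ℕ) * (-(1 / 2 : ℝ) - ε))) = (4:ℝ) ^ ((1/2:ℝ) + ε) := by
    rw [show (4:ℝ) = (2:ℝ) ^ (2:ℝ) by norm_num [Real.rpow_natCast], ← Real.rpow_mul (by norm_num : (0:ℝ) ≤ 2)]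
    ring_nf
  have e2 : ((2:ℕ) : ℝ) * (-(1 / 2 : ℝ) - ε) = -(1 + 2 * ε) := by push_cast; ring
  rw [e2] at e1 ⊢
  rw [e1]
lemma slice_bound (T : ℕ) (hT : 9 ≤ (T:ℝ)) (a y : ℝ) :
    volume {x : ℝ | (((T:ℝ) - 1) ^ 2 ≤ (x + a) ^ 2 + y ^ 2 ∧ (x + a) ^ 2 + y ^ 2 ≤ ((T:ℝ) + 1) ^ 2)
      ∧ x ^ 2 + y ^ 2 ≤ ((T:ℝ) / 2) ^ 2} ≤ 8 := by
  set t : ℝ := (T : ℝ) with ht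
  by_cases hy : y ^ 2 ≤ (t / 2) ^ 2
  · set u := Real.sqrt ((t - 1) ^ 2 - y ^ 2) with hu
    set v := Real.sqrt ((t + 1) ^ 2 - y ^ 2) with hv
    have hut : t / 2 ≤ u := by
      rw [hu, Real.le_sqrt (by linarith) (by nlinarith)]
      nlinarith
    have hu0 : (0:ℝ) ≤ u := Real.sqrt_nonneg _
    have hu2 : u ^ 2 = (t - 1) ^ 2 - y ^ 2 := Real.sq_sqrt (by nlinarith)
    have hvu : v ≤ u + 4 := by
      have h1 : (t + 1) ^ 2 - y ^ 2 ≤ (u + 4) ^ 2 := by nlinarith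
      calc v ≤ Real.sqrt ((u + 4) ^ 2) := Real.sqrt_le_sqrt h1
        _ = u + 4 := by rw [Real.sqrt_sq (by linarith)]
    have hsub : {x : ℝ | ((t - 1) ^ 2 ≤ (x + a) ^ 2 + y ^ 2 ∧ (x + a) ^ 2 + y ^ 2 ≤ (t + 1) ^ 2)
        ∧ x ^ 2 + y ^ 2 ≤ (t / 2) ^ 2} ⊆
        Set.Icc (-a - v) (-a - u) ∪ Set.Icc (-a + u) (-a + v) := by
      rintro x ⟨⟨h1, h2⟩, _h3⟩
      have hle : |x + a| ≤ v := by
        rw [← Real.sqrt_sq_eq_abs, hv]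
        exact Real.sqrt_le_sqrt (by linarith)
      have hge : u ≤ |x + a| := by
        rw [← Real.sqrt_sq_eq_abs, hu]
        exact Real.sqrt_le_sqrt (by linarith)
      rcases le_or_gt 0 (x + a) with h | h
      · right
        rw [abs_of_nonneg h] at hle hge
        constructor <;> linarith
      · left
        rw [abs_of_neg h] at hle hge
        constructor <;> linarith
    calc volume _ ≤ volume (Set.Icc (-a - v) (-a - u) ∪ Set.Icc (-a + u) (-a + v)) :=
          measure_mono hsub
      _ ≤ volume (Set.Icc (-a - v) (-a - u)) + volume (Set.Icc (-a + u) (-a + v)) :=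
          measure_union_le _ _
      _ = ENNReal.ofReal ((-a - u) - (-a - v)) + ENNReal.ofReal ((-a + v) - (-a + u)) := by
          rw [Real.volume_Icc, Real.volume_Icc]
      _ ≤ ENNReal.ofReal 4 + ENNReal.ofReal 4 := by
          gcongr <;> linarith
      _ = 8 := by
          rw [← ENNReal.ofReal_add (by norm_num) (by norm_num)]
          norm_num
  · have : {x : ℝ | (((t:ℝ) - 1) ^ 2 ≤ (x + a) ^ 2 + y ^ 2 ∧ (x + a) ^ 2 + y ^ 2 ≤ ((t:ℝ) + 1) ^ 2)
        ∧ x ^ 2 + y ^ 2 ≤ ((t:ℝ) / 2) ^ 2} = ∅ := by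
      ext x; simp only [Set.mem_setOf_eq, Set.mem_empty_iff_false, iff_false]
      rintro ⟨_, h3⟩
      nlinarith
    rw [this, measure_empty]
    exact zero_le

lemma sq_iff_aux {b r : ℝ} (hb : 0 ≤ b) (hr : 0 ≤ r) : b ≤ r ↔ b ^ 2 ≤ r ^ 2 :=
  ⟨fun h => by nlinarith, fun h => by nlinarith⟩

lemma key_C (ε : ℝ) (hε : 0 < ε) :
    ∃ M : ℝ≥0∞, M ≠ ⊤ ∧ ∀ (T : ℕ) (c : ℂ),
      ∫⁻ z : ℂ, Set.indicator {w : ℂ | (T:ℝ) - 1 ≤ ‖w‖ ∧ ‖w‖ ≤ (T:ℝ) + 1}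
          (fun _ => (1:ℝ≥0∞)) (z + c)
        * ENNReal.ofReal ((1 + ‖z‖ ^ 2) ^ (-(1 / 2 : ℝ) - ε)) ≤ M := by
  set J : ℝ≥0∞ := ∫⁻ y : ℝ, ENNReal.ofReal ((1 + y ^ 2) ^ (-(1 / 2 : ℝ) - ε)) with hJ
  refine ⟨ENNReal.ofReal 9 ^ 2 * NNReal.pi + (ENNReal.ofReal (8 * Real.pi) + J * 8), ?_, ?_⟩
  · refine ENNReal.add_ne_top.mpr ⟨?_, ENNReal.add_ne_top.mpr ⟨ENNReal.ofReal_ne_top, ?_⟩⟩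
    · exact ENNReal.mul_ne_top (by simp [ENNReal.pow_ne_top]) ENNReal.coe_ne_top
    · exact ENNReal.mul_ne_top (J_lt_top ε hε).ne (by norm_num)
  intro T c
  set S : Set ℂ := {w : ℂ | (T:ℝ) - 1 ≤ ‖w‖ ∧ ‖w‖ ≤ (T:ℝ) + 1} with hSdef
  have mW : Measurable fun z : ℂ => ENNReal.ofReal ((1 + ‖z‖ ^ 2) ^ (-(1 / 2 : ℝ) - ε)) := by
    apply Measurable.ennreal_ofReal
    apply Continuous.measurable
    apply Continuous.rpow_const (by continuity)
    intro z; left; positivity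
  have hS : MeasurableSet S := by
    rw [hSdef, Set.setOf_and]
    exact ((isClosed_le continuous_const continuous_norm).inter
      (isClosed_le continuous_norm continuous_const)).measurableSet
  -- rotation : reduce to real center
  set a : ℝ := ‖c‖ with ha
  have ha0 : 0 ≤ a := norm_nonneg c
  obtain ⟨u, hu⟩ : ∃ u : Circle, ∀ z : ℂ, ‖(u:ℂ) * z + c‖ = ‖z + (a:ℂ)‖ := by
    by_cases hc : c = 0
    · exact ⟨1, fun z => by simp [hc, ha]⟩
    · have hane : (a:ℂ) ≠ 0 := by
        simpa [ha] using (norm_ne_zero_iff.mpr hc)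
      refine ⟨⟨c / (a:ℂ), ?_⟩, fun z => ?_⟩
      · show c / (a:ℂ) ∈ Metric.sphere (0:ℂ) 1
        rw [mem_sphere_zero_iff_norm, norm_div]
        simp [ha, norm_ne_zero_iff.mpr hc]
      · show ‖c / (a:ℂ) * z + c‖ = ‖z + (a:ℂ)‖
        have h1 : c / (a:ℂ) * z + c = c / (a:ℂ) * (z + (a:ℂ)) := by
          field_simp
        rw [h1, norm_mul, norm_div]
        have : ‖(a:ℂ)‖ = a := by simp [ha0, Complex.norm_real, abs_of_nonneg]
        rw [this]
        have : ‖c‖ = a := rfl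
        rw [this, div_self (by simpa [ha] using norm_ne_zero_iff.mpr hc), one_mul]
  have hrot := (rotation u).measurePreserving.lintegral_comp
    (f := fun z : ℂ => Set.indicator {w : ℂ | (T:ℝ) - 1 ≤ ‖w‖ ∧ ‖w‖ ≤ (T:ℝ) + 1}
      (fun _ => (1:ℝ≥0∞)) (z + c) * ENNReal.ofReal ((1 + ‖z‖ ^ 2) ^ (-(1 / 2 : ℝ) - ε)))
    ((((measurable_const.indicator hS).comp (measurable_id.add_const c))).mul mW)
  rw [← hrot]
  have hptw : ∀ z : ℂ,
      Set.indicator {w : ℂ | (T:ℝ) - 1 ≤ ‖w‖ ∧ ‖w‖ ≤ (T:ℝ) + 1} (fun _ => (1:ℝ≥0∞))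
          ((rotation u) z + c) * ENNReal.ofReal ((1 + ‖(rotation u) z‖ ^ 2) ^ (-(1 / 2 : ℝ) - ε))
        = Set.indicator {w : ℂ | (T:ℝ) - 1 ≤ ‖w‖ ∧ ‖w‖ ≤ (T:ℝ) + 1} (fun _ => (1:ℝ≥0∞))
          (z + (a:ℂ)) * ENNReal.ofReal ((1 + ‖z‖ ^ 2) ^ (-(1 / 2 : ℝ) - ε)) := by
    intro z
    rw [(rotation u).norm_map, rotation_apply]
    congr 1
    simp only [Set.indicator_apply, Set.mem_setOf_eq, hu z]
  simp only [hptw]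
  -- now center is real and nonnegative
  rcases le_or_gt (T:ℝ) 8 with hT8 | hT8
  · -- small T
    have hb : ∀ z : ℂ, Set.indicator S (fun _ => (1:ℝ≥0∞)) (z + (a:ℂ))
        * ENNReal.ofReal ((1 + ‖z‖ ^ 2) ^ (-(1 / 2 : ℝ) - ε))
        ≤ Set.indicator (Metric.closedBall (-(a:ℂ)) ((T:ℝ) + 1)) (fun _ => (1:ℝ≥0∞)) z := by
      intro z
      by_cases hz : (z + (a:ℂ)) ∈ S
      · rw [Set.indicator_of_mem hz, one_mul,
          Set.indicator_of_mem (show z ∈ Metric.closedBall (-(a:ℂ)) ((T:ℝ) + 1) by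
            rw [Metric.mem_closedBall, dist_eq_norm, sub_neg_eq_add]
            exact ((hSdef ▸ hz : z + (a:ℂ) ∈ {w : ℂ | (T:ℝ) - 1 ≤ ‖w‖ ∧ ‖w‖ ≤ (T:ℝ) + 1})).2)]
        refine ENNReal.ofReal_le_one.mpr (Real.rpow_le_one_of_one_le_of_nonpos ?_ (by linarith))
        nlinarith [norm_nonneg z, sq_nonneg ‖z‖]
      · rw [Set.indicator_of_notMem hz, zero_mul]; exact zero_le
    refine le_trans (lintegral_mono hb) ?_
    rw [lintegral_indicator_const measurableSet_closedBall, Complex.volume_closedBall, one_mul]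
    refine le_trans ?_ le_self_add
    exact mul_le_mul' (pow_le_pow_left' (ENNReal.ofReal_le_ofReal (by linarith)) 2) le_rfl
  · -- large T
    have hT9 : 9 ≤ (T:ℝ) := by
      have h8 : 8 < T := by exact_mod_cast hT8
      exact_mod_cast h8
    set S1 : Set ℂ := {z : ℂ | z + (a:ℂ) ∈ S} with hS1def
    have hS1 : MeasurableSet S1 := hS.preimage (measurable_id.add_const _)
    set B : Set ℂ := Metric.closedBall (0:ℂ) ((T:ℝ)/2) with hBdef
    have hsplit : ∀ z : ℂ, Set.indicator S (fun _ => (1:ℝ≥0∞)) (z + (a:ℂ))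
        * ENNReal.ofReal ((1 + ‖z‖ ^ 2) ^ (-(1 / 2 : ℝ) - ε))
        = Set.indicator (S1 ∩ B) (fun _ => (1:ℝ≥0∞)) z
            * ENNReal.ofReal ((1 + ‖z‖ ^ 2) ^ (-(1 / 2 : ℝ) - ε))
          + Set.indicator (S1 \ B) (fun _ => (1:ℝ≥0∞)) z
            * ENNReal.ofReal ((1 + ‖z‖ ^ 2) ^ (-(1 / 2 : ℝ) - ε)) := by
      intro z
      have hz1 : (z + (a:ℂ) ∈ S) ↔ z ∈ S1 := by rw [hS1def]; exact Iff.rfl.symm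
      by_cases h1 : z ∈ S1 <;> by_cases h2 : z ∈ B <;>
        simp [Set.indicator_apply, hz1, h1, h2, Set.mem_inter_iff, Set.mem_diff]
    rw [lintegral_congr hsplit,
      lintegral_add_left (f := fun z => Set.indicator (S1 ∩ B) (fun _ => (1:ℝ≥0∞)) z
        * ENNReal.ofReal ((1 + ‖z‖ ^ 2) ^ (-(1 / 2 : ℝ) - ε))) ((measurable_const.indicator (hS1.inter measurableSet_closedBall)).mul mW)]
    have pout : (∫⁻ z : ℂ, Set.indicator (S1 \ B) (fun _ => (1:ℝ≥0∞)) z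
        * ENNReal.ofReal ((1 + ‖z‖ ^ 2) ^ (-(1 / 2 : ℝ) - ε)))
        ≤ ENNReal.ofReal (8 * Real.pi) := by
      have hb : ∀ z : ℂ, Set.indicator (S1 \ B) (fun _ => (1:ℝ≥0∞)) z
          * ENNReal.ofReal ((1 + ‖z‖ ^ 2) ^ (-(1 / 2 : ℝ) - ε))
          ≤ Set.indicator S1 (fun _ => ENNReal.ofReal (2 / (T:ℝ))) z := by
        intro z
        by_cases hz : z ∈ S1 \ B
        · rw [Set.indicator_of_mem hz, one_mul, Set.indicator_of_mem hz.1]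
          refine ENNReal.ofReal_le_ofReal ?_
          have hz2 : (T:ℝ)/2 ≤ ‖z‖ := by
            have h' := hz.2
            rw [hBdef, Metric.mem_closedBall, dist_zero_right] at h'
            push_neg at h'
            linarith
          have h0 : (0:ℝ) < ((T:ℝ)/2)^2 := by positivity
          calc (1 + ‖z‖ ^ 2) ^ (-(1 / 2 : ℝ) - ε)
              ≤ (((T:ℝ)/2)^2) ^ (-(1 / 2 : ℝ) - ε) :=
                Real.rpow_le_rpow_of_nonpos h0 (by nlinarith) (by linarith)
            _ ≤ (((T:ℝ)/2)^2) ^ (-(1 / 2 : ℝ)) :=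
                Real.rpow_le_rpow_of_exponent_le (by nlinarith) (by linarith)
            _ = 2 / (T:ℝ) := by
                rw [← Real.rpow_natCast ((T:ℝ)/2) 2, ← Real.rpow_mul (by positivity),
                  show ((2:ℕ):ℝ) * (-(1/2):ℝ) = -1 by push_cast; ring,
                  Real.rpow_neg_one, inv_div]
        · rw [Set.indicator_of_notMem hz, zero_mul]; exact zero_le
      refine le_trans (lintegral_mono hb) ?_
      rw [lintegral_indicator_const hS1]
      have hvol : volume S1 ≤ ENNReal.ofReal ((T:ℝ)+1) ^ 2 * NNReal.pi
          - ENNReal.ofReal ((T:ℝ)-1) ^ 2 * NNReal.pi := by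
        have hsub2 : S1 ⊆ Metric.closedBall (-(a:ℂ)) ((T:ℝ)+1) \ Metric.ball (-(a:ℂ)) ((T:ℝ)-1) := by
          intro z hz
          have h1 : ‖z + (a:ℂ)‖ = dist z (-(a:ℂ)) := by rw [dist_eq_norm, sub_neg_eq_add]
          have hz' : (T:ℝ) - 1 ≤ ‖z + (a:ℂ)‖ ∧ ‖z + (a:ℂ)‖ ≤ (T:ℝ) + 1 := hz
          constructor
          · rw [Metric.mem_closedBall, ← h1]; exact hz'.2
          · rw [Metric.mem_ball, ← h1]; push_neg; exact hz'.1
        refine le_trans (measure_mono hsub2) ?_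
        rw [measure_diff (Metric.ball_subset_closedBall.trans
            (Metric.closedBall_subset_closedBall (by linarith)))
          measurableSet_ball.nullMeasurableSet
          (by rw [Complex.volume_ball]
              exact ENNReal.mul_ne_top (ENNReal.pow_ne_top ENNReal.ofReal_ne_top) ENNReal.coe_ne_top),
          Complex.volume_closedBall, Complex.volume_ball]
      refine le_trans (mul_le_mul_right hvol _) ?_
      have hpi : (NNReal.pi : ℝ≥0∞) = ENNReal.ofReal Real.pi := by
        rw [← ENNReal.ofReal_coe_nnreal, NNReal.coe_real_pi]
      rw [hpi, ← ENNReal.ofReal_pow (by linarith : (0:ℝ) ≤ (T:ℝ)+1),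
        ← ENNReal.ofReal_pow (by linarith : (0:ℝ) ≤ (T:ℝ)-1),
        ← ENNReal.ofReal_mul (by positivity), ← ENNReal.ofReal_mul (by positivity),
        ← ENNReal.ofReal_sub _ (by positivity), ← ENNReal.ofReal_mul (by positivity)]
      refine ENNReal.ofReal_le_ofReal (le_of_eq ?_)
      have hTne : (T:ℝ) ≠ 0 := by linarith
      field_simp
      ring
    have pin : (∫⁻ z : ℂ, Set.indicator (S1 ∩ B) (fun _ => (1:ℝ≥0∞)) z
        * ENNReal.ofReal ((1 + ‖z‖ ^ 2) ^ (-(1 / 2 : ℝ) - ε))) ≤ J * 8 := by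
      have mp : MeasurePreserving (Complex.measurableEquivRealProd.symm) volume volume :=
        Complex.volume_preserving_equiv_real_prod.symm Complex.measurableEquivRealProd
      have hmeasf : Measurable fun z : ℂ => Set.indicator (S1 ∩ B) (fun _ => (1:ℝ≥0∞)) z
          * ENNReal.ofReal ((1 + ‖z‖ ^ 2) ^ (-(1 / 2 : ℝ) - ε)) :=
        (measurable_const.indicator (hS1.inter measurableSet_closedBall)).mul mW
      rw [← mp.lintegral_comp hmeasf]
      set S3 : Set (ℝ × ℝ) := {p : ℝ × ℝ |
        (((T:ℝ)-1)^2 ≤ (p.1 + a)^2 + p.2^2 ∧ (p.1 + a)^2 + p.2^2 ≤ ((T:ℝ)+1)^2)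
          ∧ p.1^2 + p.2^2 ≤ ((T:ℝ)/2)^2} with hS3def
      have hS3meas : MeasurableSet S3 := by
        rw [hS3def, Set.setOf_and, Set.setOf_and]
        refine MeasurableSet.inter (MeasurableSet.inter ?_ ?_) ?_
        · exact measurableSet_le measurable_const
            (((measurable_fst.add_const a).pow_const 2).add (measurable_snd.pow_const 2))
        · exact measurableSet_le
            (((measurable_fst.add_const a).pow_const 2).add (measurable_snd.pow_const 2))
            measurable_const
        · exact measurableSet_le
            ((measurable_fst.pow_const 2).add (measurable_snd.pow_const 2)) measurable_const
      have hnorm1 : ∀ p : ℝ × ℝ, ‖Complex.measurableEquivRealProd.symm p‖^2 = p.1^2 + p.2^2 := by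
        intro p
        rw [Complex.sq_norm, Complex.normSq_apply]
        simp [Complex.measurableEquivRealProd_symm_apply]
        ring
      have hnorm2 : ∀ p : ℝ × ℝ,
          ‖Complex.measurableEquivRealProd.symm p + (a:ℂ)‖^2 = (p.1 + a)^2 + p.2^2 := by
        intro p
        rw [Complex.sq_norm, Complex.normSq_apply]
        simp [Complex.measurableEquivRealProd_symm_apply]
        ring
      have hptw2 : ∀ p : ℝ × ℝ,
          Set.indicator (S1 ∩ B) (fun _ => (1:ℝ≥0∞)) (Complex.measurableEquivRealProd.symm p)
            * ENNReal.ofReal ((1 + ‖Complex.measurableEquivRealProd.symm p‖ ^ 2) ^ (-(1 / 2 : ℝ) - ε))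
          = Set.indicator S3 (fun _ => (1:ℝ≥0∞)) p
            * ENNReal.ofReal ((1 + (p.1^2 + p.2^2)) ^ (-(1 / 2 : ℝ) - ε)) := by
        intro p
        have hmem : (Complex.measurableEquivRealProd.symm p ∈ S1 ∩ B) ↔ p ∈ S3 := by
          rw [Set.mem_inter_iff, hS1def, Set.mem_setOf_eq, hSdef, Set.mem_setOf_eq,
            hBdef, Metric.mem_closedBall, dist_zero_right, hS3def, Set.mem_setOf_eq,
            sq_iff_aux (by linarith) (norm_nonneg _), sq_iff_aux (norm_nonneg _) (by linarith),
            sq_iff_aux (norm_nonneg _) (by positivity), hnorm1, hnorm2]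
        rw [hnorm1 p]
        congr 1
        by_cases h : p ∈ S3
        · rw [Set.indicator_of_mem h, Set.indicator_of_mem (hmem.mpr h)]
        · rw [Set.indicator_of_notMem (fun hc => h (hmem.mp hc)), Set.indicator_of_notMem h]
      simp only [hptw2]
      rw [Measure.volume_eq_prod,
        lintegral_prod_symm (fun p : ℝ × ℝ => Set.indicator S3 (fun _ => (1:ℝ≥0∞)) p
          * ENNReal.ofReal ((1 + (p.1^2 + p.2^2)) ^ (-(1 / 2 : ℝ) - ε))) (Measurable.aemeasurable ((measurable_const.indicator hS3meas).mul
          (Measurable.ennreal_ofReal ((Continuous.rpow_const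
            (continuous_const.add ((continuous_fst.pow 2).add (continuous_snd.pow 2)))
            (fun p => Or.inl (by show (1:ℝ) + (p.1^2 + p.2^2) ≠ 0; positivity))).measurable))))]
      have hinner : ∀ y : ℝ, (∫⁻ x : ℝ, Set.indicator S3 (fun _ => (1:ℝ≥0∞)) (x, y)
          * ENNReal.ofReal ((1 + (x^2 + y^2)) ^ (-(1 / 2 : ℝ) - ε)))
          ≤ ENNReal.ofReal ((1 + y^2) ^ (-(1 / 2 : ℝ) - ε)) * 8 := by
        intro y
        set Sy : Set ℝ := {x : ℝ |
          (((T:ℝ)-1)^2 ≤ (x + a)^2 + y^2 ∧ (x + a)^2 + y^2 ≤ ((T:ℝ)+1)^2)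
            ∧ x^2 + y^2 ≤ ((T:ℝ)/2)^2} with hSydef
        have hSymeas : MeasurableSet Sy := by
          rw [hSydef, Set.setOf_and, Set.setOf_and]
          refine MeasurableSet.inter (MeasurableSet.inter ?_ ?_) ?_
          · exact measurableSet_le measurable_const
              (((measurable_id.add_const a).pow_const 2).add measurable_const)
          · exact measurableSet_le
              (((measurable_id.add_const a).pow_const 2).add measurable_const) measurable_const
          · exact measurableSet_le ((measurable_id.pow_const 2).add measurable_const)
              measurable_const
        have hb2 : ∀ x : ℝ, Set.indicator S3 (fun _ => (1:ℝ≥0∞)) (x, y)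
            * ENNReal.ofReal ((1 + (x^2 + y^2)) ^ (-(1 / 2 : ℝ) - ε))
            ≤ Set.indicator Sy (fun _ => ENNReal.ofReal ((1 + y^2) ^ (-(1 / 2 : ℝ) - ε))) x := by
          intro x
          by_cases hx : (x, y) ∈ S3
          · rw [Set.indicator_of_mem hx, one_mul, Set.indicator_of_mem (show x ∈ Sy from hx)]
            exact ENNReal.ofReal_le_ofReal
              (Real.rpow_le_rpow_of_nonpos (by positivity) (by nlinarith) (by linarith))
          · rw [Set.indicator_of_notMem hx, zero_mul]; exact zero_le
        refine le_trans (lintegral_mono hb2) ?_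
        rw [lintegral_indicator_const hSymeas]
        exact mul_le_mul_right (slice_bound T hT9 a y) _
      refine le_trans (lintegral_mono hinner) ?_
      have hmy : Measurable fun y : ℝ => ENNReal.ofReal ((1 + y^2) ^ (-(1 / 2 : ℝ) - ε)) := by
        apply Measurable.ennreal_ofReal
        apply Continuous.measurable
        apply Continuous.rpow_const (continuous_const.add (continuous_pow 2))
        intro y; left; show (1:ℝ) + y^2 ≠ 0; positivity
      rw [lintegral_mul_const 8 hmy]
    calc _ ≤ J * 8 + ENNReal.ofReal (8 * Real.pi) := add_le_add pin pout
      _ = ENNReal.ofReal (8 * Real.pi) + J * 8 := add_comm _ _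
      _ ≤ _ := le_add_self

lemma key_E (ε : ℝ) (hε : 0 < ε) :
    ∃ M : ℝ≥0∞, M ≠ ⊤ ∧ ∀ (T : ℕ) (c : EuclideanSpace ℝ (Fin 2)),
      (∫⁻ x : EuclideanSpace ℝ (Fin 2),
        Set.indicator {z : EuclideanSpace ℝ (Fin 2) | (T:ℝ) - 1 ≤ ‖z‖ ∧ ‖z‖ ≤ (T:ℝ) + 1}
          (fun _ => (1:ℝ≥0∞)) (x + c)
        * ENNReal.ofReal ((1 + ‖x‖ ^ 2) ^ (-(1 / 2 : ℝ) - ε))) ≤ M := by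
  obtain ⟨M, hM, hkey⟩ := key_C ε hε
  refine ⟨M, hM, ?_⟩
  intro T c
  set L := Complex.orthonormalBasisOneI.repr with hLdef
  have mp := L.measurePreserving
  have hS : MeasurableSet {z : EuclideanSpace ℝ (Fin 2) | (T:ℝ) - 1 ≤ ‖z‖ ∧ ‖z‖ ≤ (T:ℝ) + 1} := by
    rw [Set.setOf_and]
    exact ((isClosed_le continuous_const continuous_norm).inter
      (isClosed_le continuous_norm continuous_const)).measurableSet
  have mW : Measurable fun x : EuclideanSpace ℝ (Fin 2) =>
      ENNReal.ofReal ((1 + ‖x‖ ^ 2) ^ (-(1 / 2 : ℝ) - ε)) := by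
    apply Measurable.ennreal_ofReal
    apply Continuous.measurable
    apply Continuous.rpow_const (continuous_const.add ((continuous_norm).pow 2))
    intro z; left; exact (add_pos_of_pos_of_nonneg one_pos (sq_nonneg _)).ne'
  have hmeas : Measurable fun x : EuclideanSpace ℝ (Fin 2) =>
      Set.indicator {z : EuclideanSpace ℝ (Fin 2) | (T:ℝ) - 1 ≤ ‖z‖ ∧ ‖z‖ ≤ (T:ℝ) + 1}
        (fun _ => (1:ℝ≥0∞)) (x + c)
      * ENNReal.ofReal ((1 + ‖x‖ ^ 2) ^ (-(1 / 2 : ℝ) - ε)) :=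
    ((measurable_const.indicator hS).comp (measurable_id.add_const c)).mul mW
  rw [← mp.lintegral_comp hmeas]
  have hptw : ∀ z : ℂ,
      Set.indicator {w : EuclideanSpace ℝ (Fin 2) | (T:ℝ) - 1 ≤ ‖w‖ ∧ ‖w‖ ≤ (T:ℝ) + 1}
          (fun _ => (1:ℝ≥0∞)) (L z + c)
        * ENNReal.ofReal ((1 + ‖L z‖ ^ 2) ^ (-(1 / 2 : ℝ) - ε))
      = Set.indicator {w : ℂ | (T:ℝ) - 1 ≤ ‖w‖ ∧ ‖w‖ ≤ (T:ℝ) + 1}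
          (fun _ => (1:ℝ≥0∞)) (z + L.symm c)
        * ENNReal.ofReal ((1 + ‖z‖ ^ 2) ^ (-(1 / 2 : ℝ) - ε)) := by
    intro z
    rw [L.norm_map]
    congr 1
    have hLz : L z + c = L (z + L.symm c) := by rw [map_add, L.apply_symm_apply]
    have hmem : (L z + c ∈ {w : EuclideanSpace ℝ (Fin 2) | (T:ℝ) - 1 ≤ ‖w‖ ∧ ‖w‖ ≤ (T:ℝ) + 1})
        ↔ (z + L.symm c ∈ {w : ℂ | (T:ℝ) - 1 ≤ ‖w‖ ∧ ‖w‖ ≤ (T:ℝ) + 1}) := by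
      rw [Set.mem_setOf_eq, Set.mem_setOf_eq, hLz, L.norm_map]
    by_cases h : z + L.symm c ∈ {w : ℂ | (T:ℝ) - 1 ≤ ‖w‖ ∧ ‖w‖ ≤ (T:ℝ) + 1}
    · rw [Set.indicator_of_mem (hmem.mpr h), Set.indicator_of_mem h]
    · rw [Set.indicator_of_notMem (fun hc => h (hmem.mp hc)), Set.indicator_of_notMem h]
  simp only [hptw]
  exact hkey T (L.symm c)

lemma tau_mp : MeasurePreserving
    (fun p : EuclideanSpace ℝ (Fin 2) × EuclideanSpace ℝ (Fin 2) => (p.1, -p.1 - p.2))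
    ((volume : Measure (EuclideanSpace ℝ (Fin 2))).prod volume)
    ((volume : Measure (EuclideanSpace ℝ (Fin 2))).prod volume) := by
  have h1 := measurePreserving_prod_add (volume : Measure (EuclideanSpace ℝ (Fin 2))) volume
  have h2 : MeasurePreserving
      (Prod.map (id : EuclideanSpace ℝ (Fin 2) → EuclideanSpace ℝ (Fin 2))
        (Neg.neg : EuclideanSpace ℝ (Fin 2) → EuclideanSpace ℝ (Fin 2)))
      ((volume : Measure (EuclideanSpace ℝ (Fin 2))).prod volume)
      ((volume : Measure (EuclideanSpace ℝ (Fin 2))).prod volume) :=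
    (MeasurePreserving.id volume).prod (Measure.measurePreserving_neg volume)
  have h3 := h2.comp h1
  have heq : (Prod.map (id : EuclideanSpace ℝ (Fin 2) → EuclideanSpace ℝ (Fin 2))
      (Neg.neg : EuclideanSpace ℝ (Fin 2) → EuclideanSpace ℝ (Fin 2)))
      ∘ (fun z : EuclideanSpace ℝ (Fin 2) × EuclideanSpace ℝ (Fin 2) => (z.1, z.1 + z.2))
      = fun p : EuclideanSpace ℝ (Fin 2) × EuclideanSpace ℝ (Fin 2) => (p.1, -p.1 - p.2) := by
    funext p
    simp only [Prod.map, Function.comp, id_eq, Prod.mk.injEq, true_and]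
    abel
  rwa [heq] at h3

abbrev E2 := EuclideanSpace ℝ (Fin 2)

lemma main_meas (ε : ℝ) (M : ℝ≥0∞)
    (hkey : ∀ (T : ℕ) (c : EuclideanSpace ℝ (Fin 2)),
      (∫⁻ x : EuclideanSpace ℝ (Fin 2),
        Set.indicator {z : EuclideanSpace ℝ (Fin 2) | (T:ℝ) - 1 ≤ ‖z‖ ∧ ‖z‖ ≤ (T:ℝ) + 1}
          (fun _ => (1:ℝ≥0∞)) (x + c)
        * ENNReal.ofReal ((1 + ‖x‖ ^ 2) ^ (-(1 / 2 : ℝ) - ε))) ≤ M)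
    (T : ℕ) (g₁ g₂ g₃ : EuclideanSpace ℝ (Fin 2) → ℝ)
    (m1 : Measurable g₁) (m2 : Measurable g₂) (m3 : Measurable g₃)
    (h1 : 0 ≤ g₁) (h2 : 0 ≤ g₂) (h3 : 0 ≤ g₃) :
    (∫⁻ p : EuclideanSpace ℝ (Fin 2) × EuclideanSpace ℝ (Fin 2),
        ENNReal.ofReal
          (Set.indicator
              {z : EuclideanSpace ℝ (Fin 2) | (T : ℝ) - 1 ≤ ‖z‖ ∧ ‖z‖ ≤ (T : ℝ) + 1}
              (fun _ => (1 : ℝ)) p.2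
            * (1 + ‖p.1‖ ^ 2) ^ ((-(1 / 2 : ℝ) - ε) / 2)
            * g₁ p.1 * g₂ p.2 * g₃ (-p.1 - p.2)))
      ≤ M ^ ((1:ℝ)/2) *
        (eLpNorm g₁ 2 volume * eLpNorm g₂ 2 volume * eLpNorm g₃ 2 volume) := by
  classical
  set S : Set E2 := {z : E2 | (T : ℝ) - 1 ≤ ‖z‖ ∧ ‖z‖ ≤ (T : ℝ) + 1} with hSdef
  have hS : MeasurableSet S := by
    rw [hSdef, Set.setOf_and]
    exact ((isClosed_le continuous_const continuous_norm).inter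
      (isClosed_le continuous_norm continuous_const)).measurableSet
  set w : E2 → ℝ := fun x => (1 + ‖x‖ ^ 2) ^ ((-(1 / 2 : ℝ) - ε) / 2) with hwdef
  have hw0 : ∀ x, 0 ≤ w x := fun x => Real.rpow_nonneg (by positivity) _
  have mw : Measurable w := by
    apply Continuous.measurable
    apply Continuous.rpow_const (continuous_const.add ((continuous_norm).pow 2))
    intro z; left; exact (add_pos_of_pos_of_nonneg one_pos (sq_nonneg _)).ne'
  set F : E2 × E2 → ℝ≥0∞ := fun p => ENNReal.ofReal (g₁ p.1) * ENNReal.ofReal (g₂ p.2) with hFdef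
  set G : E2 × E2 → ℝ≥0∞ := fun p => Set.indicator S (fun _ => (1:ℝ≥0∞)) p.2 *
    (ENNReal.ofReal (w p.1) * ENNReal.ofReal (g₃ (-p.1 - p.2))) with hGdef
  have mF : Measurable F :=
    ((m1.comp' measurable_fst).ennreal_ofReal).mul ((m2.comp' measurable_snd).ennreal_ofReal)
  have hm3 : Measurable fun p : E2 × E2 => g₃ (-p.1 - p.2) :=
    m3.comp' (measurable_fst.neg.sub measurable_snd)
  have mG : Measurable G :=
    ((measurable_const.indicator hS).comp' measurable_snd).mul
      (((mw.comp' measurable_fst).ennreal_ofReal).mul hm3.ennreal_ofReal)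
  have hFG : ∀ p : E2 × E2,
      ENNReal.ofReal (Set.indicator S (fun _ => (1:ℝ)) p.2 * w p.1 * g₁ p.1 * g₂ p.2
        * g₃ (-p.1 - p.2)) = F p * G p := by
    intro p
    by_cases hp : p.2 ∈ S
    · rw [hFdef, hGdef]
      simp only [Set.indicator_of_mem hp]
      rw [one_mul, show w p.1 * g₁ p.1 * g₂ p.2 * g₃ (-p.1 - p.2)
          = (g₁ p.1 * g₂ p.2) * (w p.1 * g₃ (-p.1 - p.2)) from by ring,
        ENNReal.ofReal_mul (mul_nonneg (h1 p.1) (h2 p.2)), ENNReal.ofReal_mul (h1 p.1),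
        ENNReal.ofReal_mul (hw0 p.1), one_mul]
    · rw [hGdef]
      simp only [Set.indicator_of_notMem hp]
      rw [zero_mul, zero_mul, zero_mul, zero_mul, ENNReal.ofReal_zero, zero_mul, mul_zero]
  rw [lintegral_congr hFG]
  have hconj : Real.HolderConjugate 2 2 := Real.HolderConjugate.two_two
  refine le_trans
    (ENNReal.lintegral_mul_le_Lp_mul_Lq volume hconj mF.aemeasurable mG.aemeasurable) ?_
  -- square norms
  have hsn : ∀ g : E2 → ℝ, 0 ≤ g →
      (∫⁻ x : E2, ENNReal.ofReal (g x ^ 2)) = eLpNorm g 2 volume ^ (2:ℝ) := by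
    intro g hg
    rw [eLpNorm_eq_lintegral_rpow_enorm_toReal (by norm_num) (by norm_num), ← ENNReal.rpow_mul]
    have h2t : ((2:ℝ≥0∞)).toReal = (2:ℝ) := by simp
    rw [h2t, show (1/(2:ℝ))*2 = 1 by norm_num, ENNReal.rpow_one]
    refine lintegral_congr fun x => ?_
    rw [Real.enorm_eq_ofReal (hg x), ENNReal.ofReal_rpow_of_nonneg (hg x) (by norm_num)]
    norm_num
  have hofr2 : ∀ (r : ℝ), 0 ≤ r → ENNReal.ofReal r ^ (2:ℝ) = ENNReal.ofReal (r ^ 2) := by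
    intro r hr
    rw [ENNReal.ofReal_rpow_of_nonneg hr (by norm_num)]
    norm_num
  have hF2 : (∫⁻ p : E2 × E2, F p ^ (2:ℝ))
      = eLpNorm g₁ 2 volume ^ (2:ℝ) * eLpNorm g₂ 2 volume ^ (2:ℝ) := by
    have hp : ∀ p : E2 × E2, F p ^ (2:ℝ)
        = (fun x => ENNReal.ofReal (g₁ x ^ 2)) p.1 * (fun x => ENNReal.ofReal (g₂ x ^ 2)) p.2 := by
      intro p
      rw [hFdef]
      dsimp only
      rw [ENNReal.mul_rpow_of_nonneg _ _ (by norm_num : (0:ℝ) ≤ 2),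
        hofr2 _ (h1 p.1), hofr2 _ (h2 p.2)]
    rw [lintegral_congr hp, Measure.volume_eq_prod,
      lintegral_prod_mul ((m1.pow_const 2).ennreal_ofReal.aemeasurable)
        ((m2.pow_const 2).ennreal_ofReal.aemeasurable),
      hsn g₁ h1, hsn g₂ h2]
  -- G squared
  set H : E2 × E2 → ℝ≥0∞ := fun q =>
    Set.indicator S (fun _ => (1:ℝ≥0∞)) (q.1 + q.2)
      * ENNReal.ofReal ((1 + ‖q.1‖ ^ 2) ^ (-(1 / 2 : ℝ) - ε))
      * ENNReal.ofReal (g₃ q.2 ^ 2) with hHdef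
  have mW2 : Measurable fun x : E2 => ENNReal.ofReal ((1 + ‖x‖ ^ 2) ^ (-(1 / 2 : ℝ) - ε)) := by
    apply Measurable.ennreal_ofReal
    apply Continuous.measurable
    apply Continuous.rpow_const (continuous_const.add ((continuous_norm).pow 2))
    intro z; left; exact (add_pos_of_pos_of_nonneg one_pos (sq_nonneg _)).ne'
  have mH : Measurable H :=
    (((measurable_const.indicator hS).comp' (measurable_fst.add measurable_snd)).mul
      (mW2.comp' measurable_fst)).mul ((m3.comp' measurable_snd).pow_const 2).ennreal_ofReal
  have hGsq : ∀ p : E2 × E2, G p ^ (2:ℝ) = H (p.1, -p.1 - p.2) := by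
    intro p
    rw [hGdef, hHdef]
    dsimp only
    rw [ENNReal.mul_rpow_of_nonneg _ _ (by norm_num : (0:ℝ) ≤ 2),
      ENNReal.mul_rpow_of_nonneg _ _ (by norm_num : (0:ℝ) ≤ 2)]
    have hind : (Set.indicator S (fun _ => (1:ℝ≥0∞)) p.2) ^ (2:ℝ)
        = Set.indicator S (fun _ => (1:ℝ≥0∞)) (p.1 + (-p.1 - p.2)) := by
      have hpt : p.1 + (-p.1 - p.2) = -p.2 := by abel
      rw [hpt]
      have hmem : (p.2 ∈ S) ↔ (-p.2 ∈ S) := by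
        rw [hSdef, Set.mem_setOf_eq, Set.mem_setOf_eq, norm_neg]
      by_cases hp : p.2 ∈ S
      · rw [Set.indicator_of_mem hp, Set.indicator_of_mem (hmem.mp hp), ENNReal.one_rpow]
      · rw [Set.indicator_of_notMem hp, Set.indicator_of_notMem (fun hc => hp (hmem.mpr hc)),
          ENNReal.zero_rpow_of_pos (by norm_num)]
    rw [hind]
    have hw2 : ENNReal.ofReal (w p.1) ^ (2:ℝ)
        = ENNReal.ofReal ((1 + ‖p.1‖ ^ 2) ^ (-(1 / 2 : ℝ) - ε)) := by
      rw [ENNReal.ofReal_rpow_of_nonneg (hw0 p.1) (by norm_num), hwdef]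
      dsimp only
      rw [← Real.rpow_mul (by positivity), div_mul_cancel₀ _ (by norm_num : (2:ℝ) ≠ 0)]
    rw [hw2, hofr2 _ (h3 _), mul_assoc]
  have hG2 : (∫⁻ p : E2 × E2, G p ^ (2:ℝ)) ≤ M * eLpNorm g₃ 2 volume ^ (2:ℝ) := by
    have hcv : (∫⁻ p : E2 × E2, H (p.1, -p.1 - p.2) ∂((volume : Measure E2).prod volume))
        = ∫⁻ q : E2 × E2, H q ∂((volume : Measure E2).prod volume) := tau_mp.lintegral_comp mH
    rw [lintegral_congr hGsq, Measure.volume_eq_prod, hcv,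
      lintegral_prod_symm _ mH.aemeasurable]
    have hin : ∀ y : E2, (∫⁻ x : E2, H (x, y)) ≤ M * ENNReal.ofReal (g₃ y ^ 2) := by
      intro y
      have hHxy : ∀ x : E2, H (x, y) = (Set.indicator S (fun _ => (1:ℝ≥0∞)) (x + y)
          * ENNReal.ofReal ((1 + ‖x‖ ^ 2) ^ (-(1 / 2 : ℝ) - ε))) * ENNReal.ofReal (g₃ y ^ 2) :=
        fun x => rfl
      rw [lintegral_congr hHxy,
        lintegral_mul_const _ (f := fun x => Set.indicator S (fun _ => (1:ℝ≥0∞)) (x + y)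
          * ENNReal.ofReal ((1 + ‖x‖ ^ 2) ^ (-(1 / 2 : ℝ) - ε))) (((measurable_const.indicator hS).comp' (measurable_id'.add_const y)).mul mW2)]
      exact mul_le_mul_left (hkey T y) _
    refine le_trans (lintegral_mono hin) ?_
    rw [lintegral_const_mul _ ((m3.pow_const 2).ennreal_ofReal), hsn g₃ h3]
  calc (∫⁻ p : E2 × E2, F p ^ (2:ℝ)) ^ (1/(2:ℝ)) * (∫⁻ p : E2 × E2, G p ^ (2:ℝ)) ^ (1/(2:ℝ))
      ≤ (eLpNorm g₁ 2 volume ^ (2:ℝ) * eLpNorm g₂ 2 volume ^ (2:ℝ)) ^ (1/(2:ℝ))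
        * (M * eLpNorm g₃ 2 volume ^ (2:ℝ)) ^ (1/(2:ℝ)) := by
        rw [hF2]
        exact mul_le_mul_right (ENNReal.rpow_le_rpow hG2 (by norm_num)) _
    _ = M ^ ((1:ℝ)/2) * (eLpNorm g₁ 2 volume * eLpNorm g₂ 2 volume * eLpNorm g₃ 2 volume) := by
        rw [ENNReal.mul_rpow_of_nonneg _ _ (by norm_num : (0:ℝ) ≤ 1/2),
          ENNReal.mul_rpow_of_nonneg _ _ (by norm_num : (0:ℝ) ≤ 1/2),
          ← ENNReal.rpow_mul, ← ENNReal.rpow_mul, ← ENNReal.rpow_mul,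
          show (2:ℝ) * (1/2) = 1 by norm_num, ENNReal.rpow_one, ENNReal.rpow_one,
          ENNReal.rpow_one]
        ring

/-- Trilinear estimate on the hyperplane ξ₁+ξ₂+ξ₃ = 0 (parametrized by (ξ₁,ξ₂),
with ξ₃ = −ξ₁−ξ₂), stated directly for the (nonnegative) Fourier transforms
g_i = f̂_i of the L² functions f_i; by Plancherel ‖f_i‖_{L²} = ‖g_i‖_{L²}. -/
theorem stmt_9 (ε : ℝ) (hε : 0 < ε) :
    ∃ C : ℝ≥0, ∀ (T : ℕ) (g₁ g₂ g₃ : EuclideanSpace ℝ (Fin 2) → ℝ),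
      MemLp g₁ 2 volume → MemLp g₂ 2 volume → MemLp g₃ 2 volume →
      0 ≤ g₁ → 0 ≤ g₂ → 0 ≤ g₃ →
      (∫⁻ p : EuclideanSpace ℝ (Fin 2) × EuclideanSpace ℝ (Fin 2),
        ENNReal.ofReal
          (Set.indicator
              {z : EuclideanSpace ℝ (Fin 2) | (T : ℝ) - 1 ≤ ‖z‖ ∧ ‖z‖ ≤ (T : ℝ) + 1}
              (fun _ => (1 : ℝ)) p.2
            * (1 + ‖p.1‖ ^ 2) ^ ((-(1 / 2 : ℝ) - ε) / 2)
            * g₁ p.1 * g₂ p.2 * g₃ (-p.1 - p.2)))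
      ≤ (C : ℝ≥0∞) * eLpNorm g₁ 2 volume * eLpNorm g₂ 2 volume * eLpNorm g₃ 2 volume := by
  obtain ⟨M, hM, hkey⟩ := key_E ε hε
  refine ⟨(M ^ ((1:ℝ)/2)).toNNReal, ?_⟩
  intro T g₁ g₂ g₃ hg₁ hg₂ hg₃ h01 h02 h03
  set g₁' : E2 → ℝ := fun x => max (hg₁.aestronglyMeasurable.mk g₁ x) 0 with hg1'def
  set g₂' : E2 → ℝ := fun x => max (hg₂.aestronglyMeasurable.mk g₂ x) 0 with hg2'def
  set g₃' : E2 → ℝ := fun x => max (hg₃.aestronglyMeasurable.mk g₃ x) 0 with hg3'def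
  have m1 : Measurable g₁' := (hg₁.aestronglyMeasurable.measurable_mk).max measurable_const
  have m2 : Measurable g₂' := (hg₂.aestronglyMeasurable.measurable_mk).max measurable_const
  have m3 : Measurable g₃' := (hg₃.aestronglyMeasurable.measurable_mk).max measurable_const
  have n1 : 0 ≤ g₁' := fun x => le_max_right _ _
  have n2 : 0 ≤ g₂' := fun x => le_max_right _ _
  have n3 : 0 ≤ g₃' := fun x => le_max_right _ _
  have he1 : g₁ =ᵐ[volume] g₁' := by
    filter_upwards [hg₁.aestronglyMeasurable.ae_eq_mk] with x hx
    rw [hg1'def]; dsimp only; rw [← hx]; exact (max_eq_left (h01 x)).symm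
  have he2 : g₂ =ᵐ[volume] g₂' := by
    filter_upwards [hg₂.aestronglyMeasurable.ae_eq_mk] with x hx
    rw [hg2'def]; dsimp only; rw [← hx]; exact (max_eq_left (h02 x)).symm
  have he3 : g₃ =ᵐ[volume] g₃' := by
    filter_upwards [hg₃.aestronglyMeasurable.ae_eq_mk] with x hx
    rw [hg3'def]; dsimp only; rw [← hx]; exact (max_eq_left (h03 x)).symm
  have hLHS : (∫⁻ p : E2 × E2,
        ENNReal.ofReal
          (Set.indicator {z : E2 | (T : ℝ) - 1 ≤ ‖z‖ ∧ ‖z‖ ≤ (T : ℝ) + 1}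
              (fun _ => (1 : ℝ)) p.2
            * (1 + ‖p.1‖ ^ 2) ^ ((-(1 / 2 : ℝ) - ε) / 2)
            * g₁ p.1 * g₂ p.2 * g₃ (-p.1 - p.2)))
      = (∫⁻ p : E2 × E2,
        ENNReal.ofReal
          (Set.indicator {z : E2 | (T : ℝ) - 1 ≤ ‖z‖ ∧ ‖z‖ ≤ (T : ℝ) + 1}
              (fun _ => (1 : ℝ)) p.2
            * (1 + ‖p.1‖ ^ 2) ^ ((-(1 / 2 : ℝ) - ε) / 2)
            * g₁' p.1 * g₂' p.2 * g₃' (-p.1 - p.2))) := by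
    rw [Measure.volume_eq_prod]
    apply lintegral_congr_ae
    have q1 : Measure.QuasiMeasurePreserving (Prod.fst : E2 × E2 → E2)
        ((volume : Measure E2).prod volume) volume := Measure.quasiMeasurePreserving_fst
    have q2 : Measure.QuasiMeasurePreserving (Prod.snd : E2 × E2 → E2)
        ((volume : Measure E2).prod volume) volume := Measure.quasiMeasurePreserving_snd
    have q3 : Measure.QuasiMeasurePreserving (fun p : E2 × E2 => -p.1 - p.2)
        ((volume : Measure E2).prod volume) volume :=
      q2.comp tau_mp.quasiMeasurePreserving
    filter_upwards [q1.ae_eq_comp he1, q2.ae_eq_comp he2, q3.ae_eq_comp he3] with p e1 e2 e3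
    simp only [Function.comp] at e1 e2 e3
    rw [e1, e2, e3]
  rw [hLHS, eLpNorm_congr_ae he1, eLpNorm_congr_ae he2, eLpNorm_congr_ae he3]
  refine le_trans (main_meas ε M hkey T g₁' g₂' g₃' m1 m2 m3 n1 n2 n3) ?_
  rw [ENNReal.coe_toNNReal (by
    exact ENNReal.rpow_ne_top_of_nonneg (by norm_num) hM)]
  exact le_of_eq (by ring)
end
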